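/- Let f be a transcendental entire function and suppose that for every ε > 0 there is a set E ⊆ [1,∞) of logarithmic density zero such that log L(r,f) > (1−ε) log M(r,f) for every r ∉ E. Then there exist real numbers α > 1 and r₀ > 0 such that for every r ≥ r₀ there exists σ with r ≤ σ ≤ r^α and L(σ, f) = M(r, f). -/

import Mathlib

open Filter MeasureTheory Topology

/-- The maximum modulus `M(r, f) = max {|f z| : |z| = r}`. -/
noncomputable def maxMod (f : ℂ → ℂ) (r : ℝ) : ℝ :=
  sSup ((fun z => ‖f z‖) '' Metric.sphere (0 : ℂ) r)

/-- The minimum modulus `L(r, f) = min {|f z| : |z| = r}`. -/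
noncomputable def minMod (f : ℂ → ℂ) (r : ℝ) : ℝ :=
  sInf ((fun z => ‖f z‖) '' Metric.sphere (0 : ℂ) r)

/-- A transcendental entire function: entire and not a polynomial. -/
def TranscendentalEntire (f : ℂ → ℂ) : Prop :=
  Differentiable ℂ f ∧ ¬ ∃ p : Polynomial ℂ, ∀ z, f z = p.eval z
/-- The chordal (spherical) distance on `ℂ ⊆ ℂ∞`. -/
noncomputable def chordalDist (z w : ℂ) : ℝ :=
  2 * ‖z - w‖ / Real.sqrt ((1 + ‖z‖ ^ 2) * (1 + ‖w‖ ^ 2))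

/-- The Fatou set of `f`: points with a neighbourhood on which the family of iterates
`{f^[n] : n ∈ ℕ}` is equicontinuous with respect to the spherical metric. -/
def fatouSet (f : ℂ → ℂ) : Set ℂ :=
  {z | ∃ U ∈ nhds z, ∀ x ∈ U, ∀ ε > 0, ∃ δ > 0, ∀ y ∈ U,
    ‖y - x‖ < δ → ∀ n : ℕ, chordalDist (f^[n] x) (f^[n] y) < ε}

/-- A measurable set `E ⊆ [1, ∞)` has logarithmic density zero if
`(1 / log R) ∫_{E ∩ [1,R]} dt/t → 0` as `R → ∞`. -/
def LogDensityZero (E : Set ℝ) : Prop :=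
  MeasurableSet E ∧ E ⊆ Set.Ici 1 ∧
    Tendsto (fun R : ℝ => (∫ t in E ∩ Set.Icc 1 R, 1 / t) / Real.log R) atTop (nhds 0)

/-!
Take `ε = 1/2` and let `E` be the exceptional set. Having logarithmic density zero, `E` cannot
cover `[r^6, r^12]` once `r` is large, so pick `s` there outside `E`. Comparing `M(r, f)` with a
dominant Taylor term `aₘ r^(2m)` and applying Cauchy's estimate to that term at radius
`s ≥ r^6` gives `M(s, f) ≳ M(r, f)^3`, hence `log L(s, f) > ½ log M(s, f) > log M(r, f)`.
Since `L(r, f) ≤ M(r, f) < L(s, f)` and `L(·, f)` is continuous, the intermediate value theorem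
yields `σ ∈ [r, s]` with `L(σ, f) = M(r, f)`.
-/

open Filter MeasureTheory Topology Metric Set

open scoped Nat

noncomputable def taylorCoeff (f : ℂ → ℂ) (n : ℕ) : ℂ :=
  (n ! : ℂ)⁻¹ * iteratedDeriv n f 0

section Modulus

variable {f : ℂ → ℂ} {r : ℝ}

lemma maxMod_nonneg (f : ℂ → ℂ) (r : ℝ) : 0 ≤ maxMod f r :=
  Real.sSup_nonneg (by rintro _ ⟨z, -, rfl⟩; exact norm_nonneg _)

lemma minMod_nonneg (f : ℂ → ℂ) (r : ℝ) : 0 ≤ minMod f r :=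
  Real.sInf_nonneg (by rintro _ ⟨z, -, rfl⟩; exact norm_nonneg _)

lemma norm_le_maxMod (hf : Continuous f) {z : ℂ} (hz : z ∈ sphere (0 : ℂ) r) :
    ‖f z‖ ≤ maxMod f r :=
  le_csSup ((isCompact_sphere 0 r).bddAbove_image hf.norm.continuousOn) ⟨z, hz, rfl⟩

lemma maxMod_le {C : ℝ} (hr : 0 ≤ r) (h : ∀ z ∈ sphere (0 : ℂ) r, ‖f z‖ ≤ C) :
    maxMod f r ≤ C :=
  csSup_le ((NormedSpace.sphere_nonempty.mpr hr).image _)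
    (by rintro _ ⟨z, hz, rfl⟩; exact h z hz)

lemma minMod_le_maxMod (hf : Continuous f) (hr : 0 ≤ r) : minMod f r ≤ maxMod f r := by
  obtain ⟨z, hz⟩ := NormedSpace.sphere_nonempty (x := (0 : ℂ)).mpr hr
  have hbdd : BddBelow ((fun w => ‖f w‖) '' sphere (0 : ℂ) r) :=
    ⟨0, by rintro _ ⟨w, -, rfl⟩; exact norm_nonneg _⟩
  exact (csInf_le hbdd ⟨z, hz, rfl⟩).trans (norm_le_maxMod hf hz)

lemma minMod_eq_sInf_unit_sphere (hr : 0 ≤ r) :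
    minMod f r = sInf ((fun z : ℂ => ‖f (r • z)‖) '' sphere 0 1) := by
  rw [← image_image (fun w => ‖f w‖) (fun z => r • z), image_smul,
    _root_.smul_sphere _ _ zero_le_one, smul_zero, Real.norm_of_nonneg hr, mul_one, minMod]

lemma continuousOn_minMod (hf : Continuous f) : ContinuousOn (minMod f) (Ici 0) :=
  ((isCompact_sphere (0 : ℂ) 1).continuous_sInf (by fun_prop)).continuousOn.congr
    fun _ hr => minMod_eq_sInf_unit_sphere hr

end Modulus

section Taylor

variable {f : ℂ → ℂ}

lemma hasSum_taylorCoeff_mul_pow (hf : Differentiable ℂ f) (z : ℂ) :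
    HasSum (fun n => taylorCoeff f n * z ^ n) (f z) := by
  simpa [taylorCoeff, smul_eq_mul, mul_comm, mul_left_comm]
    using Complex.hasSum_taylorSeries_of_entire hf 0 z

lemma norm_taylorCoeff_mul_pow_le (hf : Differentiable ℂ f) {R : ℝ} (hR : 0 < R) (n : ℕ) :
    ‖taylorCoeff f n‖ * R ^ n ≤ maxMod f R := by
  have hcauchy := Complex.norm_iteratedDeriv_le_of_forall_mem_sphere_norm_le n hR
    hf.diffContOnCl fun z hz => norm_le_maxMod hf.continuous hz
  rw [taylorCoeff, norm_mul, norm_inv, Complex.norm_natCast, ← le_div_iff₀ (by positivity),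
    inv_mul_le_iff₀ (by positivity)]
  simpa [mul_div_assoc] using hcauchy

end Taylor

section Growth

variable {f : ℂ → ℂ}

lemma exists_taylorCoeff_ne_zero (hf : Differentiable ℂ f) (hc : ¬∃ c, ∀ z, f z = c) :
    ∃ k, k ≠ 0 ∧ taylorCoeff f k ≠ 0 := by
  by_contra! h
  refine hc ⟨taylorCoeff f 0, fun z => (hasSum_taylorCoeff_mul_pow hf z).unique ?_⟩
  simpa using hasSum_single (f := fun n => taylorCoeff f n * z ^ n) 0
    fun k hk => by rw [h k hk, zero_mul]

lemma tendsto_maxMod_atTop (hf : Differentiable ℂ f) (hc : ¬∃ c, ∀ z, f z = c) :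
    Tendsto (maxMod f) atTop atTop := by
  obtain ⟨k, hk, hak⟩ := exists_taylorCoeff_ne_zero hf hc
  refine tendsto_atTop_mono' _ ?_ ((tendsto_pow_atTop hk).const_mul_atTop (norm_pos_iff.mpr hak))
  filter_upwards [eventually_gt_atTop 0] with R hR
  exact norm_taylorCoeff_mul_pow_le hf hR k

/-- Otherwise the Taylor series on `|z| = r` is dominated by `M(r)/2 · ∑ r⁻ⁿ < M(r)`. -/
lemma exists_maxMod_le_two_mul_taylorCoeff (hf : Differentiable ℂ f) {r : ℝ} (hr : 2 < r) :
    ∃ m, maxMod f r ≤ 2 * ‖taylorCoeff f m‖ * r ^ (2 * m) := by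
  by_contra! h
  have hr0 : 0 < r := by linarith
  have hM : 0 < maxMod f r := by simpa using (h 0).trans_le' (by positivity)
  have hq : r⁻¹ < 1 := inv_lt_one_of_one_lt₀ (by linarith)
  have hterm (z : ℂ) (hz : z ∈ sphere (0 : ℂ) r) (n : ℕ) :
      ‖taylorCoeff f n * z ^ n‖ ≤ maxMod f r / 2 * r⁻¹ ^ n := by
    rw [norm_mul, norm_pow, mem_sphere_zero_iff_norm.mp hz]
    calc ‖taylorCoeff f n‖ * r ^ n = ‖taylorCoeff f n‖ * r ^ (2 * n) * r⁻¹ ^ n := by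
          rw [two_mul, pow_add, inv_pow]; field_simp
      _ ≤ maxMod f r / 2 * r⁻¹ ^ n := by
          gcongr; linarith [h n]
  have hle : maxMod f r ≤ maxMod f r / 2 * (1 - r⁻¹)⁻¹ := maxMod_le hr0.le fun z hz =>
    (hasSum_taylorCoeff_mul_pow hf z).norm_le_of_bounded
      ((hasSum_geometric_of_lt_one (by positivity) hq).mul_left _) (hterm z hz)
  have hgeom : (1 - r⁻¹)⁻¹ < 2 := by
    rw [inv_lt_comm₀ (by linarith) two_pos]
    linarith [(inv_lt_inv₀ hr0 two_pos).2 hr]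
  nlinarith

/-- Cauchy's estimate at radius `s` applied to the dominant term `aₘ r^(2m) ≥ M(r)/2`,
with `‖aₘ‖ ≤ M(1)`. -/
lemma maxMod_pow_le (hf : Differentiable ℂ f) (k : ℕ) {r s : ℝ} (hr : 2 < r)
    (hs : r ^ (2 * (k + 1)) ≤ s) :
    maxMod f r ^ (k + 1) ≤ 2 ^ (k + 1) * maxMod f 1 ^ k * maxMod f s := by
  obtain ⟨m, hm⟩ := exists_maxMod_le_two_mul_taylorCoeff hf hr
  have hs0 : 0 < s := hs.trans_lt' (by positivity)
  have hM1 := maxMod_nonneg f 1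
  have ha1 : ‖taylorCoeff f m‖ ≤ maxMod f 1 := by
    simpa using norm_taylorCoeff_mul_pow_le hf one_pos m
  calc maxMod f r ^ (k + 1) ≤ (2 * ‖taylorCoeff f m‖ * r ^ (2 * m)) ^ (k + 1) :=
        pow_le_pow_left₀ (maxMod_nonneg f r) hm _
    _ = 2 ^ (k + 1) * ‖taylorCoeff f m‖ ^ k *
          (‖taylorCoeff f m‖ * (r ^ (2 * (k + 1))) ^ m) := by
        ring
    _ ≤ 2 ^ (k + 1) * maxMod f 1 ^ k * (‖taylorCoeff f m‖ * s ^ m) := by gcongr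
    _ ≤ 2 ^ (k + 1) * maxMod f 1 ^ k * maxMod f s := by
        gcongr
        exact norm_taylorCoeff_mul_pow_le hf hs0 m

lemma eventually_sq_maxMod_lt (hf : Differentiable ℂ f) (hc : ¬∃ c, ∀ z, f z = c) :
    ∀ᶠ r in atTop, 1 < maxMod f r ∧ ∀ s, r ^ 6 ≤ s → maxMod f r ^ 2 < maxMod f s := by
  filter_upwards [eventually_gt_atTop 2,
    (tendsto_maxMod_atTop hf hc).eventually_gt_atTop (max 1 (8 * maxMod f 1 ^ 2))] with r hr hM
  have hM1 : 1 < maxMod f r := (le_max_left _ _).trans_lt hM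
  have hM8 : 8 * maxMod f 1 ^ 2 < maxMod f r := (le_max_right _ _).trans_lt hM
  refine ⟨hM1, fun s hs => ?_⟩
  have hgrowth := maxMod_pow_le hf 2 hr hs
  have hMr : 0 < maxMod f r ^ 2 := pow_pos (one_pos.trans hM1) 2
  norm_num at hgrowth
  nlinarith [mul_lt_mul_of_pos_right hM8 hMr, sq_nonneg (maxMod f 1)]

end Growth

lemma integral_Icc_one_div {a b : ℝ} (ha : 0 < a) (hab : a ≤ b) :
    ∫ t in Icc a b, 1 / t = Real.log b - Real.log a := by
  rw [integral_Icc_eq_integral_Ioc, ← intervalIntegral.integral_of_le hab,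
    integral_one_div_of_pos ha (ha.trans_le hab), Real.log_div (ha.trans_le hab).ne' ha.ne']

/-- `[r^a, r^b]` has logarithmic measure `(b - a) log r`, a fixed proportion of `log r^b`. -/
lemma LogDensityZero.eventually_exists_rpow_notMem {E : Set ℝ} (hE : LogDensityZero E)
    {a b : ℝ} (ha : 0 ≤ a) (hab : a < b) :
    ∀ᶠ r in atTop, ∃ s ∈ Icc (r ^ a) (r ^ b), s ∉ E := by
  obtain ⟨hmeas, -, hdens⟩ := hE
  have hb : 0 < b := ha.trans_lt hab
  have hsmall := hdens.eventually (gt_mem_nhds (div_pos (sub_pos.mpr hab) hb))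
  filter_upwards [(tendsto_rpow_atTop hb).eventually hsmall, eventually_gt_atTop 1]
    with r hr hr1
  by_contra! hsub
  have hlog : 0 < Real.log r := Real.log_pos hr1
  have hra : 1 ≤ r ^ a := Real.one_le_rpow hr1.le ha
  have hrab : r ^ a ≤ r ^ b := Real.rpow_le_rpow_of_exponent_le hr1.le hab.le
  have hmono : ∫ t in Icc (r ^ a) (r ^ b), 1 / t ≤ ∫ t in E ∩ Icc 1 (r ^ b), 1 / t := by
    refine setIntegral_mono_set ?_ ?_ ?_
    · exact (continuousOn_const.div continuousOn_id fun t ht =>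
        (zero_lt_one.trans_le ht.1).ne').integrableOn_Icc.mono_set inter_subset_right
    · filter_upwards [self_mem_ae_restrict (hmeas.inter measurableSet_Icc)] with t ht
      exact one_div_nonneg.mpr (zero_le_one.trans ht.2.1)
    · exact LE.le.eventuallyLE fun t ht => ⟨hsub t ht, hra.trans ht.1, ht.2⟩
  have hlogb : Real.log (r ^ b) = b * Real.log r := Real.log_rpow (by positivity) b
  rw [integral_Icc_one_div (by positivity) hrab, hlogb, Real.log_rpow (by positivity)] at hmono
  rw [hlogb, div_lt_div_iff₀ (by positivity) hb] at hr
  nlinarith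

lemma lt_of_sq_lt_of_half_log_lt {x y z : ℝ} (hx : 1 < x) (hz : 0 ≤ z) (hxy : x ^ 2 < y)
    (hyz : (1 - 1 / 2) * Real.log y < Real.log z) : x < z := by
  have hx0 : 0 < x := one_pos.trans hx
  have hlog : Real.log x < Real.log z := by
    have := Real.log_lt_log (by positivity) hxy
    rw [Real.log_pow] at this
    push_cast at this
    linarith
  have hz0 : 0 < z := hz.lt_of_ne fun h => by
    rw [← h, Real.log_zero] at hlog
    linarith [Real.log_pos hx]
  exact (Real.log_lt_log_iff hx0 hz0).mp hlog

/-- Step 1 of the proof: under the minimum-modulus hypothesis outside sets of logarithmic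
density zero, there are `α > 1` and `r₀ > 0` such that for every `r ≥ r₀` there is
`σ ∈ [r, r^α]` with `L(σ,f) = M(r,f)`. -/
theorem exists_sigma_of_log_density_hypothesis (f : ℂ → ℂ) (hf : TranscendentalEntire f)
    (h : ∀ ε > (0 : ℝ), ∃ E : Set ℝ, LogDensityZero E ∧
      ∀ r ≥ (1 : ℝ), r ∉ E →
        Real.log (minMod f r) > (1 - ε) * Real.log (maxMod f r)) :
    ∃ α > (1 : ℝ), ∃ r₀ > (0 : ℝ), ∀ r ≥ r₀,
      ∃ σ : ℝ, r ≤ σ ∧ σ ≤ r ^ α ∧ minMod f σ = maxMod f r := by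
  obtain ⟨hd, hpoly⟩ := hf
  have hc : ¬∃ c, ∀ z, f z = c := fun ⟨c, hc⟩ => hpoly ⟨Polynomial.C c, by simp [hc]⟩
  obtain ⟨E, hE, hmin⟩ := h (1 / 2) (by norm_num)
  obtain ⟨r₀, hr₀⟩ := eventually_atTop.mp <| (eventually_sq_maxMod_lt hd hc).and <|
    (hE.eventually_exists_rpow_notMem (a := 6) (b := 12) (by norm_num) (by norm_num)).and
      (eventually_ge_atTop 1)
  refine ⟨12, by norm_num, max r₀ 1, by positivity, fun r hr => ?_⟩
  obtain ⟨⟨hM1, hgrowth⟩, ⟨s, hs, hsE⟩, hr1⟩ := hr₀ r ((le_max_left _ _).trans hr)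
  have hr6 : r ^ 6 ≤ s := by exact_mod_cast hs.1
  have hrs : r ≤ s := (le_self_pow₀ hr1 (by norm_num)).trans hr6
  have hMs : maxMod f r < minMod f s := lt_of_sq_lt_of_half_log_lt hM1 (minMod_nonneg f s)
    (hgrowth s hr6) (hmin s (hr1.trans hrs) hsE)
  obtain ⟨σ, hσ, hσM⟩ := intermediate_value_Icc hrs
    ((continuousOn_minMod hd.continuous).mono fun t ht => zero_le_one.trans (hr1.trans ht.1))
    ⟨minMod_le_maxMod hd.continuous (zero_le_one.trans hr1), hMs.le⟩
  exact ⟨σ, hσ.1, hσ.2.trans hs.2, hσM⟩
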